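/- arXiv:2002.01438 — 4 statements merged into one kernel-verified Lean document; each statement's English description precedes it below -/
import Mathlib

section
/- Let p be continuous on [0, R] with p(s) ≥ 0 and p(s) ≤ C s^γ for some γ > 1, and for ε > 0 set n(ρ) = ρ · exp(−∫₀^ρ (ε p(s)/(s(s+ε p(s)))) ds). Then |n(ρ) − ρ| ≤ C' ε for all ρ ∈ [0, R], where C' depends only on C, γ, R; in particular n(ρ) converges to ρ uniformly on [0, R] as ε → 0⁺. -/
open Real Set MeasureTheory

/-- For `p` continuous, nonnegative, with `p(s) ≤ C s^γ` (`γ > 1`) on `[0,R]`, the proper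
baryon number density `n(ρ) = ρ exp(−∫₀^ρ ε p(s)/(s(s+εp(s))) ds)` satisfies
`|n(ρ) − ρ| ≤ C' ε` on `[0,R]`, with `C'` depending only on `C, γ, R`. -/
theorem stmt1 (C γ R : ℝ) (hC : 0 < C) (hγ : 1 < γ) (hR : 0 < R) :
    ∃ C' > 0, ∀ p : ℝ → ℝ, ContinuousOn p (Set.Icc 0 R) →
      (∀ s ∈ Set.Icc (0:ℝ) R, 0 ≤ p s) →
      (∀ s ∈ Set.Icc (0:ℝ) R, p s ≤ C * s ^ γ) →
      ∀ ε > (0:ℝ), ∀ ρ ∈ Set.Icc (0:ℝ) R,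
        |ρ * Real.exp (-(∫ s in (0:ℝ)..ρ, ε * p s / (s * (s + ε * p s)))) - ρ| ≤ C' * ε := by
  refine ⟨C * R ^ γ / (γ - 1), div_pos (by positivity) (by linarith), ?_⟩
  intro p hp hp0 hpC ε hε ρ hρ
  obtain ⟨hρ0, hρR⟩ := hρ
  set f : ℝ → ℝ := fun s => ε * p s / (s * (s + ε * p s)) with hf
  set I := ∫ s in (0:ℝ)..ρ, f s with hI
  have hfnn : ∀ s ∈ Icc (0:ℝ) ρ, 0 ≤ f s := by
    intro s hs
    have hps : 0 ≤ p s := hp0 s ⟨hs.1, hs.2.trans hρR⟩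
    have hs0 : 0 ≤ s := hs.1
    positivity
  have hInn : 0 ≤ I := intervalIntegral.integral_nonneg hρ0 hfnn
  -- pointwise upper bound
  have hpt : ∀ s ∈ Icc (0:ℝ) ρ, f s ≤ ε * C * s ^ (γ - 2) := by
    intro s hs
    rcases eq_or_lt_of_le hs.1 with h0 | h0
    · have : f s = 0 := by
        simp [hf, ← h0]
      rw [this]
      positivity
    · have hps : 0 ≤ p s := hp0 s ⟨hs.1, hs.2.trans hρR⟩
      have hpsC : p s ≤ C * s ^ γ := hpC s ⟨hs.1, hs.2.trans hρR⟩
      have h1 : f s ≤ ε * (C * s ^ γ) / (s * s) := by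
        apply div_le_div₀ (by positivity)
          (mul_le_mul_of_nonneg_left hpsC hε.le) (by positivity)
        nlinarith [mul_nonneg h0.le (mul_nonneg hε.le hps)]
      have hss : s * s = s ^ (2:ℝ) := by
        rw [show (2:ℝ) = ((2:ℕ):ℝ) by norm_num, Real.rpow_natCast]; ring
      have hpow : s ^ (γ - 2) * s ^ (2:ℝ) = s ^ γ := by
        rw [← Real.rpow_add h0]; norm_num
      have h2 : ε * (C * s ^ γ) / (s * s) = ε * C * s ^ (γ - 2) := by
        rw [hss, eq_comm, eq_div_iff (by positivity), mul_assoc, mul_assoc, mul_comm (s ^ (γ-2)),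
          mul_comm (s ^ (2:ℝ))]
        rw [hpow]
      linarith
  have hg2 : (-1:ℝ) < γ - 2 := by linarith
  have hgint : IntervalIntegrable (fun s => ε * C * s ^ (γ - 2)) volume 0 ρ :=
    (intervalIntegral.intervalIntegrable_rpow' hg2).const_mul _
  have hgval : (∫ s in (0:ℝ)..ρ, ε * C * s ^ (γ - 2)) = ε * C * (ρ ^ (γ - 1) / (γ - 1)) := by
    rw [intervalIntegral.integral_const_mul, integral_rpow (Or.inl hg2)]
    rw [Real.zero_rpow (by linarith)]
    ring_nf
  have hIub : I ≤ ε * C * (ρ ^ (γ - 1) / (γ - 1)) := by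
    by_cases h : IntervalIntegrable f volume 0 ρ
    · rw [hI, ← hgval]
      exact intervalIntegral.integral_mono_on hρ0 h hgint hpt
    · rw [hI, intervalIntegral.integral_undef h]
      have hγ1 : 0 < γ - 1 := by linarith
      positivity
  -- final estimate
  have hexp1 : Real.exp (-I) ≤ 1 := Real.exp_le_one_iff.mpr (by linarith)
  have habs : |ρ * Real.exp (-I) - ρ| = ρ * (1 - Real.exp (-I)) := by
    rw [abs_of_nonpos (by nlinarith)]; ring
  have h1e : 1 - Real.exp (-I) ≤ I := by
    have := Real.add_one_le_exp (-I); linarith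
  have key : ρ * (1 - Real.exp (-I)) ≤ ρ * I := by
    apply mul_le_mul_of_nonneg_left h1e hρ0
  have hρI : ρ * I ≤ C * R ^ γ / (γ - 1) * ε := by
    rcases eq_or_lt_of_le hρ0 with h0 | h0
    · have hγ1 : 0 < γ - 1 := by linarith
      rw [← h0, zero_mul]; positivity
    · have hργ : ρ * ρ ^ (γ - 1) = ρ ^ γ := by
        nth_rewrite 1 [show ρ = ρ ^ (1:ℝ) from (Real.rpow_one ρ).symm]
        rw [← Real.rpow_add h0]; norm_num
      have hρRγ : ρ ^ γ ≤ R ^ γ := Real.rpow_le_rpow hρ0 hρR (by linarith)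
      calc ρ * I ≤ ρ * (ε * C * (ρ ^ (γ - 1) / (γ - 1))) :=
            mul_le_mul_of_nonneg_left hIub hρ0
        _ = ε * C * (ρ * ρ ^ (γ - 1)) / (γ - 1) := by ring
        _ = ε * C * ρ ^ γ / (γ - 1) := by rw [hργ]
        _ ≤ C * R ^ γ / (γ - 1) * ε := by
            rw [div_le_iff₀ (by linarith), div_mul_eq_mul_div, div_mul_cancel₀ _ (by linarith : γ - 1 ≠ 0)]
            have := mul_le_mul_of_nonneg_left hρRγ (by positivity : (0:ℝ) ≤ ε * C)
            nlinarith
  calc |ρ * Real.exp (-I) - ρ| = ρ * (1 - Real.exp (-I)) := habs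
    _ ≤ ρ * I := key
    _ ≤ C * R ^ γ / (γ - 1) * ε := hρI
end

section
/- If |u| < 1/√ε and 0 < p'(ρ) < 1/ε, then λ₊ − λ₋ > 0, where λ₋ = (u − √(p'(ρ)))/(1 − ε u √(p'(ρ))) and λ₊ = (u + √(p'(ρ)))/(1 + ε u √(p'(ρ))). In particular the relativistic Euler system is strictly hyperbolic in the region {|u| < 1/√ε, 0 < ρ < ρ_max^ε}. -/
/-!
The characteristic speeds are relativistic velocity sums `λ± = u ⊕ (±√p')` with
`u ⊕ v = (u + v) / (1 + ε u v)`. For fixed `u` with `ε u² < 1`, the map `v ↦ u ⊕ v` is strictly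
increasing wherever its denominator is positive, since cross-multiplying `u ⊕ v < u ⊕ w` leaves
`ε u² (w - v) < w - v`. Both denominators `1 ± ε u √p'` are positive because
`(ε u √p')² = (ε u²)(ε p') < 1`, so `λ₋ = u ⊕ (-√p') < u ⊕ √p' = λ₊`.
-/

noncomputable def velocityAdd (ε u v : ℝ) : ℝ := (u + v) / (1 + ε * u * v)

theorem velocityAdd_strictMonoOn {ε u : ℝ} (hu : ε * u ^ 2 < 1) :
    StrictMonoOn (velocityAdd ε u) {v | 0 < 1 + ε * u * v} := by
  intro v hv w hw hvw
  rw [velocityAdd, velocityAdd, div_lt_div_iff₀ hv hw]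
  nlinarith [mul_lt_mul_of_pos_right hu (sub_pos.mpr hvw)]

theorem mul_sq_lt_one_of_abs_lt_one_div_sqrt {ε u : ℝ} (hε : 0 < ε) (hu : |u| < 1 / √ε) :
    ε * u ^ 2 < 1 := by
  have hsqrt : 0 < √ε := Real.sqrt_pos.mpr hε
  have h : √ε * |u| < 1 := by rwa [lt_div_iff₀ hsqrt, mul_comm] at hu
  calc ε * u ^ 2 = (√ε * |u|) ^ 2 := by rw [mul_pow, Real.sq_sqrt hε.le, sq_abs]
    _ < 1 := pow_lt_one₀ (by positivity) h two_ne_zero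

theorem abs_mul_mul_sqrt_lt_one {ε u p : ℝ} (hε : 0 ≤ ε) (hp : 0 ≤ p) (hu : ε * u ^ 2 < 1)
    (hεp : ε * p < 1) : |ε * u * √p| < 1 := by
  rw [← sq_lt_one_iff_abs_lt_one]
  calc (ε * u * √p) ^ 2 = (ε * u ^ 2) * (ε * p) := by rw [mul_pow, mul_pow, Real.sq_sqrt hp]; ring
    _ < 1 := mul_lt_one_of_nonneg_of_lt_one_left (by positivity) hu hεp.le

/-- Strict hyperbolicity: if `|u| < 1/√ε` and `0 < p' < 1/ε` then `λ₋ < λ₊`. -/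
theorem stmt2 (ε u pr : ℝ) (hε : 0 < ε) (hpr : 0 < pr) (h1 : ε * pr < 1)
    (hu : |u| < 1 / Real.sqrt ε) :
    (u - Real.sqrt pr) / (1 - ε * u * Real.sqrt pr) <
      (u + Real.sqrt pr) / (1 + ε * u * Real.sqrt pr) := by
  have hεu : ε * u ^ 2 < 1 := mul_sq_lt_one_of_abs_lt_one_div_sqrt hε hu
  obtain ⟨hlo, hhi⟩ := abs_lt.mp (abs_mul_mul_sqrt_lt_one hε.le hpr.le hεu h1)
  have hmono := velocityAdd_strictMonoOn hεu
    (show 0 < 1 + ε * u * -√pr by linarith) (show 0 < 1 + ε * u * √pr by linarith)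
    (neg_lt_self (Real.sqrt_pos.mpr hpr))
  simpa only [velocityAdd, ← sub_eq_add_neg, mul_neg] using hmono
end

section
/- The function χ*(ρ, v) = M_λ · max(ρ^{2θ} − v², 0)^λ satisfies the classical entropy equation χ*_{ρρ} − θ² ρ^{2θ−2} χ*_{vv} = 0 in the interior of its support {v² < ρ^{2θ}, ρ > 0}, where λ = (3−γ)/(2(γ−1)), θ = (γ−1)/2, and 2λθ = 1 − θ. -/
/-!
Away from the boundary of its support the kernel is `c X^λ` with `X = ρ^{2θ} − v²`, so both second
derivatives follow from the chain rule. Using `(ρ^{2θ−1})² = ρ^{2θ−2} ρ^{2θ}` and `X^{λ−1} = X^{λ−2} X`,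
the difference `χ_ρρ − θ² ρ^{2θ−2} χ_vv` collapses to `2θ c λ ρ^{2θ−2} X^{λ−1} (2λθ + θ − 1)`,
which vanishes by the choice of `λ`.
-/

open Real Filter Topology

noncomputable def entropyKernel (c θ lam ρ v : ℝ) : ℝ :=
  c * max (ρ ^ (2 * θ) - v ^ 2) 0 ^ lam

theorem deriv_deriv_const_mul_rpow {f f' : ℝ → ℝ} {f'' x c p : ℝ}
    (hf : ∀ᶠ y in 𝓝 x, HasDerivAt f (f' y) y) (hf' : HasDerivAt f' f'' x) (hx : 0 < f x) :
    deriv (fun y => deriv (fun z => c * f z ^ p) y) x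
      = c * p * ((p - 1) * f x ^ (p - 2) * f' x ^ 2 + f x ^ (p - 1) * f'') := by
  have hpos : ∀ᶠ y in 𝓝 x, 0 < f y :=
    hf.self_of_nhds.continuousAt.eventually (lt_mem_nhds hx)
  have hderiv : deriv (fun z => c * f z ^ p) =ᶠ[𝓝 x] fun y => c * p * (f y ^ (p - 1) * f' y) := by
    filter_upwards [hf, hpos] with y hy hy0
    rw [((hy.rpow_const (p := p) (Or.inl hy0.ne')).const_mul c).deriv]
    ring
  have hsecond :=
    ((hf.self_of_nhds.rpow_const (p := p - 1) (Or.inl hx.ne')).fun_mul hf').const_mul (c * p)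
  rw [hderiv.deriv_eq, hsecond.deriv, show p - 1 - 1 = p - 2 by ring]
  ring

theorem deriv_deriv_const_mul_max_rpow {f f' : ℝ → ℝ} {f'' x c p : ℝ}
    (hf : ∀ᶠ y in 𝓝 x, HasDerivAt f (f' y) y) (hf' : HasDerivAt f' f'' x) (hx : 0 < f x) :
    deriv (fun y => deriv (fun z => c * max (f z) 0 ^ p) y) x
      = c * p * ((p - 1) * f x ^ (p - 2) * f' x ^ 2 + f x ^ (p - 1) * f'') := by
  have hmax : (fun z => c * max (f z) 0 ^ p) =ᶠ[𝓝 x] fun z => c * f z ^ p := by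
    filter_upwards [hf.self_of_nhds.continuousAt.eventually (lt_mem_nhds hx)] with z hz
    rw [max_eq_left hz.le]
  rw [hmax.deriv.deriv_eq]
  exact deriv_deriv_const_mul_rpow hf hf' hx

theorem deriv_deriv_entropyKernel_density (c θ lam : ℝ) {ρ v : ℝ} (hρ : 0 < ρ)
    (hv : v ^ 2 < ρ ^ (2 * θ)) :
    deriv (fun r => deriv (fun r' => entropyKernel c θ lam r' v) r) ρ
      = c * lam * ((lam - 1) * (ρ ^ (2 * θ) - v ^ 2) ^ (lam - 2) * (2 * θ * ρ ^ (2 * θ - 1)) ^ 2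
        + (ρ ^ (2 * θ) - v ^ 2) ^ (lam - 1) * (2 * θ * ((2 * θ - 1) * ρ ^ (2 * θ - 1 - 1)))) := by
  have hf : ∀ᶠ r in 𝓝 ρ, HasDerivAt (fun r => r ^ (2 * θ) - v ^ 2) (2 * θ * r ^ (2 * θ - 1)) r := by
    filter_upwards [lt_mem_nhds hρ] with r hr
    exact (hasDerivAt_rpow_const (Or.inl hr.ne')).sub_const _
  exact deriv_deriv_const_mul_max_rpow hf
    ((hasDerivAt_rpow_const (Or.inl hρ.ne')).const_mul (2 * θ)) (sub_pos.mpr hv)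

theorem deriv_deriv_entropyKernel_velocity (c θ lam : ℝ) {ρ v : ℝ} (hv : v ^ 2 < ρ ^ (2 * θ)) :
    deriv (fun w => deriv (fun w' => entropyKernel c θ lam ρ w') w) v
      = c * lam * ((lam - 1) * (ρ ^ (2 * θ) - v ^ 2) ^ (lam - 2) * (-(2 * v)) ^ 2
        + (ρ ^ (2 * θ) - v ^ 2) ^ (lam - 1) * (-2)) := by
  have hf : ∀ w, HasDerivAt (fun w => ρ ^ (2 * θ) - w ^ 2) (-(2 * w)) w := fun w => by
    simpa using (hasDerivAt_pow 2 w).const_sub (ρ ^ (2 * θ))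
  exact deriv_deriv_const_mul_max_rpow (Eventually.of_forall hf)
    (by simpa using (hasDerivAt_id v).const_mul (-2 : ℝ)) (sub_pos.mpr hv)

theorem entropyKernel_solves_entropy_equation (c θ lam : ℝ) (hθlam : 2 * lam * θ = 1 - θ)
    {ρ v : ℝ} (hρ : 0 < ρ) (hv : v ^ 2 < ρ ^ (2 * θ)) :
    deriv (fun r => deriv (fun r' => entropyKernel c θ lam r' v) r) ρ
      - θ ^ 2 * ρ ^ (2 * θ - 2) * deriv (fun w => deriv (fun w' => entropyKernel c θ lam ρ w') w) v
      = 0 := by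
  set X := ρ ^ (2 * θ) - v ^ 2
  have hρpow : (ρ ^ (2 * θ - 1)) ^ 2 = ρ ^ (2 * θ - 2) * ρ ^ (2 * θ) := by
    rw [← rpow_natCast, ← rpow_mul hρ.le, ← rpow_add hρ]
    ring_nf
  have hXpow : X ^ (lam - 1) = X ^ (lam - 2) * X := by
    rw [← rpow_add_one (sub_pos.mpr hv).ne']
    congr 1
    ring
  rw [deriv_deriv_entropyKernel_density c θ lam hρ hv,
    deriv_deriv_entropyKernel_velocity c θ lam hv, show 2 * θ - 1 - 1 = 2 * θ - 2 by ring]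
  linear_combination (4 * c * lam * (lam - 1) * θ ^ 2 * X ^ (lam - 2)) * hρpow
    + (c * lam * (6 * θ ^ 2 - 2 * θ) * ρ ^ (2 * θ - 2)) * hXpow
    + (2 * c * lam * θ * X ^ (lam - 2) * ρ ^ (2 * θ - 2) * X) * hθlam

theorem stmt6_general (γ : ℝ) (hγ : γ ∈ Set.Ioo (1:ℝ) 3) (M : ℝ)
    (θ lam : ℝ) (hθ : θ = (γ - 1) / 2) (hlam : lam = (3 - γ) / (2 * (γ - 1)))
    (χ : ℝ → ℝ → ℝ)
    (hχ : ∀ ρ v, χ ρ v = M * max (ρ ^ (2 * θ) - v ^ 2) 0 ^ lam)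
    (ρ v : ℝ) (hρ : 0 < ρ) (hv : v ^ 2 < ρ ^ (2 * θ)) :
    deriv (fun r => deriv (fun r' => χ r' v) r) ρ
      - θ ^ 2 * ρ ^ (2 * θ - 2) * deriv (fun w => deriv (fun w' => χ ρ w') w) v = 0 := by
  have hθlam : 2 * lam * θ = 1 - θ := by
    have : γ - 1 ≠ 0 := sub_ne_zero.mpr hγ.1.ne'
    rw [hθ, hlam]
    field_simp
    ring
  obtain rfl : χ = entropyKernel M θ lam := funext₂ hχ
  exact entropyKernel_solves_entropy_equation M θ lam hθlam hρ hv

/-- The classical entropy kernel `χ*(ρ,v) = M_λ (ρ^{2θ} − v²)₊^λ` solves the entropy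
equation `χ_{ρρ} − θ²ρ^{2θ−2} χ_{vv} = 0` in the interior of its support. -/
theorem stmt6 (γ : ℝ) (hγ : γ ∈ Set.Ioo (1:ℝ) 3) (M : ℝ) (hM : 0 < M)
    (θ lam : ℝ) (hθ : θ = (γ - 1) / 2) (hlam : lam = (3 - γ) / (2 * (γ - 1)))
    (χ : ℝ → ℝ → ℝ)
    (hχ : ∀ ρ v, χ ρ v = M * max (ρ ^ (2 * θ) - v ^ 2) 0 ^ lam)
    (ρ v : ℝ) (hρ : 0 < ρ) (hv : v ^ 2 < ρ ^ (2 * θ)) :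
    deriv (fun r => deriv (fun r' => χ r' v) r) ρ
      - θ ^ 2 * ρ ^ (2 * θ - 2) * deriv (fun w => deriv (fun w' => χ ρ w') w) v = 0 :=
  stmt6_general γ hγ M θ lam hθ hlam χ hχ ρ v hρ hv
end

section
/- Mollified product of a Heaviside function and a Dirac mass: let φ₂, φ₃ ∈ C_c^∞(ℝ) be nonnegative with support in (−1,1) and integral 1, and set φ_j^δ(s) = δ^{−1} φ_j(s/δ). For m₂, m₃ ∈ ℝ, the measures (H_{m₂} * φ₂^δ)(s) · (δ_{m₃} * φ₃^δ)(s) ds converge weakly-star as δ → 0 to Ω δ_{s = m₃}, where H_{m₂} is the Heaviside function 1_{s ≥ m₂}, δ_{m₃} the Dirac mass at m₃, and Ω = 0 if m₂ > m₃, Ω = 1 if m₂ < m₃, and Ω = ∫_{−1}^1 ∫_s^1 φ₂(t − s − 1) φ₃(t) dt ds if m₂ = m₃. -/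
open MeasureTheory Set Filter

/-- The primitive `Φ(x) = ∫_{-∞}^x φ` of a mollifier. -/
noncomputable def Phi (φ : ℝ → ℝ) (x : ℝ) : ℝ := ∫ τ in Set.Iic x, φ τ

theorem phi_zero (φ : ℝ → ℝ) (hsupp : Function.support φ ⊆ Set.Ioo (-1) 1) {x : ℝ}
    (hx : x ≤ -1) : Phi φ x = 0 := by
  apply setIntegral_eq_zero_of_forall_eq_zero
  intro τ hτ
  by_contra h
  have := hsupp h
  simp only [Set.mem_Ioo, Set.mem_Iic] at *
  linarith [this.1]

theorem phi_one (φ : ℝ → ℝ) (hsupp : Function.support φ ⊆ Set.Ioo (-1) 1)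
    (hint : ∫ s, φ s = 1) {x : ℝ} (hx : 1 ≤ x) : Phi φ x = 1 := by
  rw [Phi, setIntegral_eq_integral_of_forall_compl_eq_zero, hint]
  intro τ hτ
  by_contra h
  have := hsupp h
  simp only [Set.mem_Ioo, Set.mem_Iic, not_le] at *
  linarith [this.2]

theorem phi_mono (φ : ℝ → ℝ) (hi : Integrable φ) (hpos : ∀ s, 0 ≤ φ s) :
    Monotone (Phi φ) := by
  intro x y hxy
  exact setIntegral_mono_set hi.integrableOn
    (Filter.Eventually.of_forall fun τ => hpos τ)
    (HasSubset.Subset.eventuallyLE (Set.Iic_subset_Iic.mpr hxy))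

theorem phi_nonneg (φ : ℝ → ℝ) (hpos : ∀ s, 0 ≤ φ s) (x : ℝ) : 0 ≤ Phi φ x :=
  setIntegral_nonneg measurableSet_Iic fun τ _ => hpos τ

theorem phi_le_one (φ : ℝ → ℝ) (hi : Integrable φ) (hpos : ∀ s, 0 ≤ φ s)
    (hsupp : Function.support φ ⊆ Set.Ioo (-1) 1) (hint : ∫ s, φ s = 1) (x : ℝ) :
    Phi φ x ≤ 1 := by
  calc Phi φ x ≤ Phi φ (max x 1) := phi_mono φ hi hpos (le_max_left _ _)
  _ = 1 := phi_one φ hsupp hint (le_max_right _ _)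

theorem phi_abs_le_one (φ : ℝ → ℝ) (hi : Integrable φ) (hpos : ∀ s, 0 ≤ φ s)
    (hsupp : Function.support φ ⊆ Set.Ioo (-1) 1) (hint : ∫ s, φ s = 1) (x : ℝ) :
    |Phi φ x| ≤ 1 :=
  abs_le.mpr ⟨by linarith [phi_nonneg φ hpos x], phi_le_one φ hi hpos hsupp hint x⟩

theorem inner_eq (φ : ℝ → ℝ) (m₂ s δ : ℝ) (hδ : 0 < δ) :
    (∫ τ, (if m₂ ≤ s - τ then (1:ℝ) else 0) * (δ⁻¹ * φ (τ / δ)))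
      = Phi φ ((s - m₂) / δ) := by
  have h1 : (fun τ => (if m₂ ≤ s - τ then (1:ℝ) else 0) * (δ⁻¹ * φ (τ / δ)))
      = fun τ => (Set.Iic ((s - m₂)/δ)).indicator (fun u => δ⁻¹ * φ u) (τ / δ) := by
    funext τ
    rw [Set.indicator_apply]
    have : m₂ ≤ s - τ ↔ τ / δ ∈ Set.Iic ((s - m₂)/δ) := by
      rw [Set.mem_Iic, div_le_div_iff_of_pos_right hδ]
      constructor <;> intro h <;> linarith
    by_cases h : m₂ ≤ s - τ
    · rw [if_pos h, if_pos (this.mp h), one_mul]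
    · rw [if_neg h, if_neg (fun hh => h (this.mpr hh)), zero_mul]
  rw [h1, MeasureTheory.Measure.integral_comp_div
    (fun u => (Set.Iic ((s - m₂)/δ)).indicator (fun u => δ⁻¹ * φ u) u) δ,
    MeasureTheory.integral_indicator measurableSet_Iic]
  rw [MeasureTheory.integral_const_mul, abs_of_pos hδ, smul_eq_mul, Phi]
  field_simp

theorem subst_eq (φ₂ φ₃ f : ℝ → ℝ) (m₂ m₃ δ : ℝ) (hδ : 0 < δ) :
    (∫ s, Phi φ₂ ((s - m₂)/δ) * (δ⁻¹ * φ₃ ((s - m₃) / δ)) * f s)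
      = ∫ t, Phi φ₂ ((m₃ - m₂)/δ + t) * φ₃ t * f (m₃ + δ * t) := by
  set G : ℝ → ℝ := fun s => Phi φ₂ ((s - m₂)/δ) * (δ⁻¹ * φ₃ ((s - m₃) / δ)) * f s with hG
  have h1 : (∫ t, G (δ * t + m₃)) = |δ⁻¹| • ∫ y, G (y + m₃) :=
    MeasureTheory.Measure.integral_comp_mul_left (fun y => G (y + m₃)) δ
  have h2 : (∫ y, G (y + m₃)) = ∫ s, G s := integral_add_right_eq_self G m₃
  have h3 : (∫ s, G s) = δ * ∫ t, G (δ * t + m₃) := by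
    rw [h1, h2, smul_eq_mul, ← mul_assoc, abs_of_pos (inv_pos.mpr hδ)]
    field_simp
  rw [h3, ← MeasureTheory.integral_const_mul]
  congr 1
  funext t
  have hδ' : δ ≠ 0 := ne_of_gt hδ
  have e1 : (m₃ + δ * t - m₂)/δ = (m₃ - m₂)/δ + t := by field_simp; ring
  have e2 : (m₃ + δ * t - m₃)/δ = t := by field_simp; ring
  have e3 : δ * t + m₃ = m₃ + δ * t := by ring
  rw [hG]
  simp only [e1, e2, e3]
  rw [show δ * (Phi φ₂ ((m₃ - m₂)/δ + t) * (δ⁻¹ * φ₃ t) * f (m₃ + δ * t))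
      = (δ * δ⁻¹) * (Phi φ₂ ((m₃ - m₂)/δ + t) * φ₃ t * f (m₃ + δ * t)) from by ring,
    mul_inv_cancel₀ hδ', one_mul]

theorem omega_eq (φ₂ φ₃ : ℝ → ℝ) (hc₂ : Continuous φ₂) (hc₃ : Continuous φ₃)
    (hpos₂ : ∀ s, 0 ≤ φ₂ s) (hpos₃ : ∀ s, 0 ≤ φ₃ s)
    (hsupp₂ : Function.support φ₂ ⊆ Set.Ioo (-1) 1)
    (hsupp₃ : Function.support φ₃ ⊆ Set.Ioo (-1) 1)
    (hi₂ : Integrable φ₂) :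
    (∫ s in (-1:ℝ)..1, ∫ t in s..(1:ℝ), φ₂ (t - s - 1) * φ₃ t)
      = ∫ t, Phi φ₂ t * φ₃ t := by
  set S : Set ℝ := Set.Ioc (-1) 1 with hS
  set K : ℝ → ℝ → ℝ := fun s t => if s < t then φ₂ (t - s - 1) * φ₃ t else 0 with hK
  have step1 : ∀ s ∈ S, (∫ t in s..(1:ℝ), φ₂ (t - s - 1) * φ₃ t) = ∫ t in S, K s t := by
    intro s hs
    obtain ⟨hs1, hs2⟩ := hs
    rw [intervalIntegral.integral_of_le hs2]
    have : ∀ t, K s t = (Set.Ioi s).indicator (fun t => φ₂ (t - s - 1) * φ₃ t) t := by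
      intro t; rw [Set.indicator_apply]; rfl
    simp_rw [this]
    rw [setIntegral_indicator measurableSet_Ioi]
    have hset : S ∩ Set.Ioi s = Set.Ioc s 1 := by
      ext x
      simp only [hS, Set.mem_inter_iff, Set.mem_Ioc, Set.mem_Ioi]
      constructor
      · rintro ⟨⟨h1, h2⟩, h3⟩; exact ⟨h3, h2⟩
      · rintro ⟨h1, h2⟩; exact ⟨⟨lt_of_lt_of_le hs1 (le_of_lt h1), h2⟩, h1⟩
    rw [hset]
  have step2 : (∫ s in (-1:ℝ)..1, ∫ t in s..(1:ℝ), φ₂ (t - s - 1) * φ₃ t)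
      = ∫ s in S, ∫ t in S, K s t := by
    rw [intervalIntegral.integral_of_le (by norm_num : (-1:ℝ) ≤ 1)]
    exact setIntegral_congr_fun measurableSet_Ioc step1
  haveI hfin : IsFiniteMeasure ((volume.restrict S).prod (volume.restrict S)) := by
    haveI : IsFiniteMeasure (volume.restrict S) :=
      ⟨by rw [Measure.restrict_apply_univ]; exact measure_Ioc_lt_top⟩
    infer_instance
  obtain ⟨C₂, hC₂⟩ := (HasCompactSupport.of_support_subset_isCompact isCompact_Icc
      (hsupp₂.trans Set.Ioo_subset_Icc_self)).exists_bound_of_continuous hc₂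
  obtain ⟨C₃, hC₃⟩ := (HasCompactSupport.of_support_subset_isCompact isCompact_Icc
      (hsupp₃.trans Set.Ioo_subset_Icc_self)).exists_bound_of_continuous hc₃
  have hC₂' : ∀ x, φ₂ x ≤ C₂ := fun x => (le_abs_self _).trans (hC₂ x)
  have hC₃' : ∀ x, φ₃ x ≤ C₃ := fun x => (le_abs_self _).trans (hC₃ x)
  have hC₂0 : 0 ≤ C₂ := le_trans (norm_nonneg _) (hC₂ 0)
  have hC₃0 : 0 ≤ C₃ := le_trans (norm_nonneg _) (hC₃ 0)
  have hKmeas : Measurable fun p : ℝ × ℝ => K p.1 p.2 := by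
    apply Measurable.ite (measurableSet_lt measurable_fst measurable_snd)
    · exact ((hc₂.comp (by continuity)).mul (hc₃.comp continuous_snd)).measurable
    · exact measurable_const
  have hKint : Integrable (fun p : ℝ × ℝ => K p.1 p.2)
      ((volume.restrict S).prod (volume.restrict S)) := by
    apply Integrable.mono' (integrable_const (C₂ * C₃))
      hKmeas.aestronglyMeasurable
    apply Filter.Eventually.of_forall
    rintro ⟨s, t⟩
    simp only [hK]
    by_cases h : s < t
    · rw [if_pos h, Real.norm_eq_abs, abs_of_nonneg (mul_nonneg (hpos₂ _) (hpos₃ _))]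
      exact mul_le_mul (hC₂' _) (hC₃' _) (hpos₃ _) hC₂0
    · rw [if_neg h]; simp [mul_nonneg hC₂0 hC₃0]
  have step3 : (∫ s in S, ∫ t in S, K s t) = ∫ t in S, ∫ s in S, K s t :=
    MeasureTheory.integral_integral_swap hKint
  have step4 : ∀ t ∈ S, (∫ s in S, K s t) = Phi φ₂ t * φ₃ t := by
    intro t ht
    obtain ⟨ht1, ht2⟩ := ht
    have : ∀ s, K s t = (Set.Iio t).indicator (fun s => φ₂ (t - s - 1) * φ₃ t) s := by
      intro s; rw [Set.indicator_apply]; rfl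
    simp_rw [this]
    rw [setIntegral_indicator measurableSet_Iio]
    have hset : S ∩ Set.Iio t = Set.Ioo (-1) t := by
      ext x
      simp only [hS, Set.mem_inter_iff, Set.mem_Ioc, Set.mem_Iio, Set.mem_Ioo]
      constructor
      · rintro ⟨⟨h1, h2⟩, h3⟩; exact ⟨h1, h3⟩
      · rintro ⟨h1, h2⟩; exact ⟨⟨h1, le_trans (le_of_lt h2) ht2⟩, h2⟩
    rw [hset, ← MeasureTheory.integral_Ioc_eq_integral_Ioo,
      ← intervalIntegral.integral_of_le (le_of_lt ht1)]
    have : (∫ s in (-1:ℝ)..t, φ₂ (t - s - 1) * φ₃ t)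
        = (∫ s in (-1:ℝ)..t, φ₂ ((t-1) - s)) * φ₃ t := by
      rw [← intervalIntegral.integral_mul_const]
      congr 1; funext s; ring_nf
    rw [this, intervalIntegral.integral_comp_sub_left φ₂ (t-1)]
    have e1 : t - 1 - t = (-1 : ℝ) := by ring
    have e2 : t - 1 - (-1) = t := by ring
    rw [e1, e2]
    congr 1
    have := intervalIntegral.integral_Iic_sub_Iic (μ := volume) (f := φ₂) (a := (-1:ℝ)) (b := t)
      hi₂.integrableOn hi₂.integrableOn
    rw [← this]
    have : (∫ x in Set.Iic (-1:ℝ), φ₂ x) = 0 := phi_zero φ₂ hsupp₂ le_rfl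
    rw [this, sub_zero]; rfl
  have step5 : (∫ t in S, ∫ s in S, K s t) = ∫ t in S, Phi φ₂ t * φ₃ t :=
    setIntegral_congr_fun measurableSet_Ioc step4
  have step6 : (∫ t in S, Phi φ₂ t * φ₃ t) = ∫ t, Phi φ₂ t * φ₃ t := by
    apply setIntegral_eq_integral_of_forall_compl_eq_zero
    intro t ht
    have : φ₃ t = 0 := by
      by_contra h
      have := hsupp₃ h
      simp only [Set.mem_Ioo] at this
      exact ht ⟨this.1, le_of_lt this.2⟩
    rw [this, mul_zero]
  rw [step2, step3, step5, step6]

/-- Mollified product of a Heaviside function and a Dirac mass: the measures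
`(H_{m₂} * φ₂^δ)(s) (δ_{m₃} * φ₃^δ)(s) ds` converge weakly-star as `δ → 0⁺` to
`Ω δ_{s=m₃}`, where `Ω` depends on the order of `m₂` and `m₃` and, in the equal case,
on the mollifiers. -/
theorem stmt12 (φ₂ φ₃ : ℝ → ℝ) (m₂ m₃ : ℝ)
    (hs₂ : ContDiff ℝ (⊤ : ℕ∞) φ₂) (hs₃ : ContDiff ℝ (⊤ : ℕ∞) φ₃)
    (hpos₂ : ∀ s, 0 ≤ φ₂ s) (hpos₃ : ∀ s, 0 ≤ φ₃ s)
    (hsupp₂ : Function.support φ₂ ⊆ Set.Ioo (-1) 1)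
    (hsupp₃ : Function.support φ₃ ⊆ Set.Ioo (-1) 1)
    (hint₂ : ∫ s, φ₂ s = 1) (hint₃ : ∫ s, φ₃ s = 1) :
    ∀ f : ℝ → ℝ, Continuous f → HasCompactSupport f →
      Filter.Tendsto (fun δ : ℝ =>
          ∫ s, (∫ τ, (if m₂ ≤ s - τ then (1:ℝ) else 0) * (δ⁻¹ * φ₂ (τ / δ)))
            * (δ⁻¹ * φ₃ ((s - m₃) / δ)) * f s)
        (nhdsWithin 0 (Set.Ioi 0))
        (nhds ((if m₃ < m₂ then 0 else if m₂ < m₃ then 1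
          else ∫ s in (-1:ℝ)..1, ∫ t in s..(1:ℝ), φ₂ (t - s - 1) * φ₃ t) * f m₃)) := by
  intro f hf hfc
  have hc₂ : Continuous φ₂ := hs₂.continuous
  have hc₃ : Continuous φ₃ := hs₃.continuous
  have hcs₂ : HasCompactSupport φ₂ :=
    HasCompactSupport.of_support_subset_isCompact isCompact_Icc
      (hsupp₂.trans Set.Ioo_subset_Icc_self)
  have hcs₃ : HasCompactSupport φ₃ :=
    HasCompactSupport.of_support_subset_isCompact isCompact_Icc
      (hsupp₃.trans Set.Ioo_subset_Icc_self)
  have hi₂ : Integrable φ₂ := hc₂.integrable_of_hasCompactSupport hcs₂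
  have hi₃ : Integrable φ₃ := hc₃.integrable_of_hasCompactSupport hcs₃
  have hPmono : Monotone (Phi φ₂) := phi_mono φ₂ hi₂ hpos₂
  have hPabs : ∀ x, |Phi φ₂ x| ≤ 1 := phi_abs_le_one φ₂ hi₂ hpos₂ hsupp₂ hint₂
  obtain ⟨Cf, hCf⟩ := hfc.exists_bound_of_continuous hf
  have hCf0 : (0:ℝ) ≤ Cf := le_trans (norm_nonneg _) (hCf 0)
  -- the transformed family
  set F : ℝ → ℝ → ℝ := fun δ t => Phi φ₂ ((m₃ - m₂)/δ + t) * φ₃ t * f (m₃ + δ * t) with hF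
  have hcongr : ∀ᶠ δ in nhdsWithin (0:ℝ) (Set.Ioi 0),
      (∫ s, (∫ τ, (if m₂ ≤ s - τ then (1:ℝ) else 0) * (δ⁻¹ * φ₂ (τ / δ)))
        * (δ⁻¹ * φ₃ ((s - m₃) / δ)) * f s) = ∫ t, F δ t := by
    filter_upwards [self_mem_nhdsWithin] with δ hδ
    rw [Set.mem_Ioi] at hδ
    have h1 : ∀ s, (∫ τ, (if m₂ ≤ s - τ then (1:ℝ) else 0) * (δ⁻¹ * φ₂ (τ / δ)))
        = Phi φ₂ ((s - m₂) / δ) := fun s => inner_eq φ₂ m₂ s δ hδ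
    simp_rw [h1]
    exact subst_eq φ₂ φ₃ f m₂ m₃ δ hδ
  rw [Filter.tendsto_congr' hcongr]
  -- continuity of f along the path
  have hft : ∀ t : ℝ, Filter.Tendsto (fun δ : ℝ => f (m₃ + δ * t))
      (nhdsWithin 0 (Set.Ioi 0)) (nhds (f m₃)) := by
    intro t
    have hcont : Continuous fun δ : ℝ => m₃ + δ * t := by continuity
    exact ((hf.tendsto m₃).comp ((hcont.tendsto' 0 m₃ (by simp)).mono_left
      nhdsWithin_le_nhds))
  -- dominated convergence setup (common parts)
  have hmeas : ∀ᶠ δ in nhdsWithin (0:ℝ) (Set.Ioi 0),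
      AEStronglyMeasurable (F δ) volume := by
    apply Filter.Eventually.of_forall
    intro δ
    have : Measurable (F δ) := by
      apply Measurable.mul
      apply Measurable.mul
      · exact hPmono.measurable.comp (measurable_const.add measurable_id)
      · exact hc₃.measurable
      · exact (hf.comp (by continuity : Continuous fun t : ℝ => m₃ + δ * t)).measurable
    exact this.aestronglyMeasurable
  have hbound : ∀ᶠ δ in nhdsWithin (0:ℝ) (Set.Ioi 0),
      ∀ᵐ t : ℝ, ‖F δ t‖ ≤ φ₃ t * Cf := by
    apply Filter.Eventually.of_forall
    intro δ
    apply Filter.Eventually.of_forall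
    intro t
    rw [hF]
    simp only [Real.norm_eq_abs, abs_mul]
    calc |Phi φ₂ ((m₃ - m₂)/δ + t)| * |φ₃ t| * |f (m₃ + δ * t)|
        ≤ 1 * |φ₃ t| * Cf := by
          apply mul_le_mul (mul_le_mul (hPabs _) le_rfl (abs_nonneg _) zero_le_one)
            (hCf _) (abs_nonneg _)
          positivity
      _ = φ₃ t * Cf := by rw [one_mul, abs_of_nonneg (hpos₃ t)]
  have hbi : Integrable (fun t => φ₃ t * Cf) := hi₃.mul_const Cf
  rcases lt_trichotomy m₂ m₃ with hlt | heqc | hgt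
  · -- m₂ < m₃ : limit is 1 * f m₃
    rw [if_neg (not_lt.mpr (le_of_lt hlt)), if_pos hlt]
    have hlim : ∀ᵐ t : ℝ, Filter.Tendsto (fun δ => F δ t)
        (nhdsWithin 0 (Set.Ioi 0)) (nhds (φ₃ t * f m₃)) := by
      apply Filter.Eventually.of_forall
      intro t
      have hev : ∀ᶠ δ in nhdsWithin (0:ℝ) (Set.Ioi 0),
          F δ t = φ₃ t * f (m₃ + δ * t) := by
        have hε : (0:ℝ) < (m₃ - m₂) / (|t| + 2) := by
          apply div_pos (by linarith) (by positivity)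
        filter_upwards [Ioo_mem_nhdsGT_of_mem
          (Set.mem_Ico.mpr ⟨le_rfl, hε⟩)] with δ hδ
        obtain ⟨hδ0, hδε⟩ := hδ
        have harg : (1:ℝ) ≤ (m₃ - m₂)/δ + t := by
          have h1 : δ * (|t| + 2) < m₃ - m₂ := by
            rw [← lt_div_iff₀ (by positivity : (0:ℝ) < |t| + 2)]
            exact lt_of_lt_of_le hδε (le_of_eq (by ring))
          have h2 : 1 - t < (m₃ - m₂)/δ := by
            rw [lt_div_iff₀ hδ0]
            nlinarith [le_abs_self t, neg_abs_le t]
          linarith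
        rw [hF]
        simp only
        rw [phi_one φ₂ hsupp₂ hint₂ harg, one_mul]
      exact Filter.Tendsto.congr' (by filter_upwards [hev] with δ h using h.symm)
        (tendsto_const_nhds.mul (hft t))
    have := MeasureTheory.tendsto_integral_filter_of_dominated_convergence
      (F := F) (f := fun t => φ₃ t * f m₃) (bound := fun t => φ₃ t * Cf)
      hmeas hbound hbi hlim
    have hval : (∫ t, φ₃ t * f m₃) = 1 * f m₃ := by
      rw [MeasureTheory.integral_mul_const, hint₃]
    rwa [hval] at this
  · -- m₂ = m₃
    rw [if_neg (by rw [heqc]; exact lt_irrefl _), if_neg (by rw [heqc]; exact lt_irrefl _)]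
    have hzero : m₃ - m₂ = 0 := by rw [heqc]; ring
    have hlim : ∀ᵐ t : ℝ, Filter.Tendsto (fun δ => F δ t)
        (nhdsWithin 0 (Set.Ioi 0)) (nhds (Phi φ₂ t * φ₃ t * f m₃)) := by
      apply Filter.Eventually.of_forall
      intro t
      have heq : ∀ δ : ℝ, F δ t = (Phi φ₂ t * φ₃ t) * f (m₃ + δ * t) := by
        intro δ
        rw [hF]
        simp only [hzero, zero_div, zero_add]
      simp_rw [heq]
      exact tendsto_const_nhds.mul (hft t)
    have := MeasureTheory.tendsto_integral_filter_of_dominated_convergence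
      (F := F) (f := fun t => Phi φ₂ t * φ₃ t * f m₃) (bound := fun t => φ₃ t * Cf)
      hmeas hbound hbi hlim
    have hval : (∫ t, Phi φ₂ t * φ₃ t * f m₃)
        = (∫ s in (-1:ℝ)..1, ∫ t in s..(1:ℝ), φ₂ (t - s - 1) * φ₃ t) * f m₃ := by
      rw [MeasureTheory.integral_mul_const,
        omega_eq φ₂ φ₃ hc₂ hc₃ hpos₂ hpos₃ hsupp₂ hsupp₃ hi₂]
    rwa [hval] at this
  · -- m₃ < m₂ : limit is 0
    rw [if_pos hgt, zero_mul]
    have hlim : ∀ᵐ t : ℝ, Filter.Tendsto (fun δ => F δ t)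
        (nhdsWithin 0 (Set.Ioi 0)) (nhds 0) := by
      apply Filter.Eventually.of_forall
      intro t
      have hev : ∀ᶠ δ in nhdsWithin (0:ℝ) (Set.Ioi 0), F δ t = 0 := by
        have hε : (0:ℝ) < (m₂ - m₃) / (|t| + 2) := by
          apply div_pos (by linarith) (by positivity)
        filter_upwards [Ioo_mem_nhdsGT_of_mem
          (Set.mem_Ico.mpr ⟨le_rfl, hε⟩)] with δ hδ
        obtain ⟨hδ0, hδε⟩ := hδ
        have harg : (m₃ - m₂)/δ + t ≤ -1 := by
          have h1 : δ * (|t| + 2) < m₂ - m₃ := by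
            rw [← lt_div_iff₀ (by positivity : (0:ℝ) < |t| + 2)]
            exact lt_of_lt_of_le hδε (le_of_eq (by ring))
          have h2 : t + 1 < (m₂ - m₃)/δ := by
            rw [lt_div_iff₀ hδ0]
            nlinarith [le_abs_self t, neg_abs_le t]
          have h3 : (m₃ - m₂)/δ = -((m₂ - m₃)/δ) := by ring
          rw [h3]
          linarith
        rw [hF]
        simp only
        rw [phi_zero φ₂ hsupp₂ harg, zero_mul, zero_mul]
      exact Filter.Tendsto.congr' (by filter_upwards [hev] with δ h using h.symm)
        tendsto_const_nhds
    have := MeasureTheory.tendsto_integral_filter_of_dominated_convergence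
      (F := F) (f := fun _ => (0:ℝ)) (bound := fun t => φ₃ t * Cf)
      hmeas hbound hbi hlim
    rwa [MeasureTheory.integral_zero] at this
end
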